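/- With c_{ij} = p_i q_j − p_j q_i for complex numbers p₁,...,p₄, q₁,...,q₄, one has 4|c₃₄|² + 4|c₁₂|² + 2|c₂₄|² + 2|c₁₃|² − 4Re(c₃₄·conj(c₁₂)) + 4Re(c₂₃·conj(c₁₄)) ≥ 0. -/

import Mathlib

/-! Write `c_ij = p_i q_j - p_j q_i`. The Plücker relation `c₂₃ c₁₄ = c₁₃ c₂₄ - c₃₄ c₁₂` gives
`|c₂₃| |c₁₄| ≤ |c₁₃| |c₂₄| + |c₃₄| |c₁₂|`. Bounding both real parts by Cauchy–Schwarz, the expression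
is then at least `4 (|c₃₄| - |c₁₂|)² + 2 (|c₂₄| - |c₁₃|)²`. -/

theorem plucker_relation {R : Type*} [CommRing R] (p₁ p₂ p₃ p₄ q₁ q₂ q₃ q₄ : R) :
    (p₂ * q₃ - p₃ * q₂) * (p₁ * q₄ - p₄ * q₁) =
      (p₁ * q₃ - p₃ * q₁) * (p₂ * q₄ - p₄ * q₂) - (p₃ * q₄ - p₄ * q₃) * (p₁ * q₂ - p₂ * q₁) := by
  ring

theorem norm_mul_norm_le_of_plucker {𝕜 : Type*} [NormedField 𝕜] (p₁ p₂ p₃ p₄ q₁ q₂ q₃ q₄ : 𝕜) :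
    ‖p₂ * q₃ - p₃ * q₂‖ * ‖p₁ * q₄ - p₄ * q₁‖ ≤
      ‖p₁ * q₃ - p₃ * q₁‖ * ‖p₂ * q₄ - p₄ * q₂‖ + ‖p₃ * q₄ - p₄ * q₃‖ * ‖p₁ * q₂ - p₂ * q₁‖ := by
  simp only [← norm_mul]
  rw [plucker_relation]
  exact norm_sub_le _ _

theorem Complex.abs_re_mul_conj_le (z w : ℂ) : |(z * starRingEnd ℂ w).re| ≤ ‖z‖ * ‖w‖ := by
  simpa only [norm_mul, Complex.norm_conj] using Complex.abs_re_le_norm (z * starRingEnd ℂ w)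

theorem class_weakly_positive (p₁ p₂ p₃ p₄ q₁ q₂ q₃ q₄ : ℂ) :
    4 * ‖p₃ * q₄ - p₄ * q₃‖ ^ 2 + 4 * ‖p₁ * q₂ - p₂ * q₁‖ ^ 2 +
      2 * ‖p₂ * q₄ - p₄ * q₂‖ ^ 2 + 2 * ‖p₁ * q₃ - p₃ * q₁‖ ^ 2 -
      4 * ((p₃ * q₄ - p₄ * q₃) * (starRingEnd ℂ) (p₁ * q₂ - p₂ * q₁)).re +
      4 * ((p₂ * q₃ - p₃ * q₂) * (starRingEnd ℂ) (p₁ * q₄ - p₄ * q₁)).re ≥ 0 := by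
  have h₃₄₁₂ := (abs_le.mp <| Complex.abs_re_mul_conj_le
    (p₃ * q₄ - p₄ * q₃) (p₁ * q₂ - p₂ * q₁)).2
  have h₂₃₁₄ := (abs_le.mp <| Complex.abs_re_mul_conj_le
    (p₂ * q₃ - p₃ * q₂) (p₁ * q₄ - p₄ * q₁)).1
  have hplucker := norm_mul_norm_le_of_plucker p₁ p₂ p₃ p₄ q₁ q₂ q₃ q₄
  linarith [sq_nonneg (‖p₃ * q₄ - p₄ * q₃‖ - ‖p₁ * q₂ - p₂ * q₁‖),
    sq_nonneg (‖p₂ * q₄ - p₄ * q₂‖ - ‖p₁ * q₃ - p₃ * q₁‖)]
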